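/- In the algebra of δ-pseudo-differential operators over a regular-discrete time scale (graininess μ(x) ≠ 0 everywhere), the element 1 + μδ is invertible with nonnegative-order inverse (1+μδ)^{−1} = ∑_{k=0}^∞ (−δ)^k (μ^k + Δ(μ^{k+1})) = ∑_{k=0}^∞ (−δ)^k (E(μ^{k+1})/μ), i.e. this series, multiplied on the right by (1+μδ), equals 1 (using E = 1 + μΔ and the converse Leibniz formula). -/

import Mathlib

/-- The coefficients (written to the right of the powers of `δ`) of the formal
series `S = ∑_{k=0}^∞ (−δ)ᵏ (E(μ^{k+1})/μ)`, the candidate nonnegative-order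
inverse of `1 + μδ`. -/
noncomputable def invSeriesCoeff {R : Type*} [CommRing R] (E : R ≃+* R) (μ : R)
    [Invertible μ] (k : ℤ) : R :=
  if 0 ≤ k then (-1 : R) ^ k.toNat * E (μ ^ (k.toNat + 1)) * ⅟μ else 0

/-!
Since `μ` is invertible, `E = 1 + μΔ` determines `Δ = μ⁻¹(E − 1)`, and then
`a − Δ(E⁻¹(aμ)) = μ⁻¹ E⁻¹(aμ)`. For the coefficients `a_k = (−1)ᵏ E(μ^{k+1})/μ` of the
series, `E⁻¹(a_k μ) = (−1)ᵏ μ^{k+1}`, so the coefficient of `δᵐ` in `S(1 + μδ)` is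
`(−1)ᵐ μᵐ + (−1)^{m−1} μᵐ`, which telescopes to `0` for `m ≥ 1` and is `1` for `m = 0`.
-/

section

variable {R : Type*} [CommRing R] {E : R ≃+* R} {μ : R} [Invertible μ] {Δ : R → R}

theorem delta_eq_invOf_mul_sub (hE : ∀ a : R, E a = a + μ * Δ a) (a : R) :
    Δ a = ⅟μ * (E a - a) := by
  rw [hE, add_sub_cancel_left, invOf_mul_cancel_left]

theorem sub_delta_symm_mul (hE : ∀ a : R, E a = a + μ * Δ a) (a : R) :
    a - Δ (E.symm (a * μ)) = ⅟μ * E.symm (a * μ) := by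
  rw [delta_eq_invOf_mul_sub hE, RingEquiv.apply_symm_apply]
  linear_combination (-a) * invOf_mul_self μ

end

section

variable {R : Type*} [CommRing R] (E : R ≃+* R) (μ : R) [Invertible μ]

theorem invSeriesCoeff_natCast (n : ℕ) :
    invSeriesCoeff E μ n = (-1) ^ n * E (μ ^ (n + 1)) * ⅟μ := by
  simp [invSeriesCoeff]

theorem invSeriesCoeff_of_neg {k : ℤ} (hk : k < 0) : invSeriesCoeff E μ k = 0 :=
  if_neg hk.not_ge

theorem symm_invSeriesCoeff_natCast_mul (n : ℕ) :
    E.symm (invSeriesCoeff E μ n * μ) = (-1) ^ n * μ ^ (n + 1) := by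
  rw [invSeriesCoeff_natCast, invOf_mul_cancel_right, map_mul, RingEquiv.symm_apply_apply]
  simp

end

theorem inv_one_add_mu_delta_general (R : Type*) [CommRing R] (E : R ≃+* R) (μ : R)
    [Invertible μ] (Δ : R → R)
    (hE : ∀ a : R, E a = a + μ * Δ a) :
    ∀ m : ℤ,
      invSeriesCoeff E μ m - Δ (E.symm (invSeriesCoeff E μ m * μ))
          + E.symm (invSeriesCoeff E μ (m - 1) * μ)
        = if m = 0 then 1 else 0 := by
  intro m
  rw [sub_delta_symm_mul hE]
  rcases lt_or_ge m 0 with hm | hm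
  · rw [invSeriesCoeff_of_neg E μ hm, invSeriesCoeff_of_neg E μ (by omega), if_neg hm.ne]
    simp
  lift m to ℕ using hm
  rcases m with _ | n
  · rw [symm_invSeriesCoeff_natCast_mul, Nat.cast_zero, zero_sub,
      invSeriesCoeff_of_neg E μ (by norm_num)]
    simp
  · rw [Nat.cast_succ, add_sub_cancel_right, ← Nat.cast_add_one, symm_invSeriesCoeff_natCast_mul,
      symm_invSeriesCoeff_natCast_mul, if_neg (by omega)]
    linear_combination (-1) ^ (n + 1) * μ ^ (n + 1) * invOf_mul_self μ

/-- On a regular-discrete time scale (`μ` invertible), in the algebra of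
`δ`-pseudo-differential operators (`δu = Δu + (Eu)δ`, `E = 1 + μΔ`), the series
`S = ∑_{k=0}^∞ (−δ)ᵏ (E(μ^{k+1})/μ) = ∑_{k=0}^∞ (−δ)ᵏ (μᵏ + Δ(μ^{k+1}))`
satisfies `S·(1+μδ) = 1`, i.e. `1 + μδ` is invertible with nonnegative-order
inverse `S`.  Coefficient-wise (writing `A = ∑ δⁱ aᵢ` with coefficients on the
right, so that `(A(1+μδ))_m = a_m − Δ(E⁻¹(a_m μ)) + E⁻¹(a_{m−1} μ)` by the rule
`uδ = δE⁻¹u − Δ(E⁻¹u)`), the product `S·(1+μδ)` has coefficient `1` at `δ⁰`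
and `0` elsewhere. -/
theorem inv_one_add_mu_delta (R : Type*) [CommRing R] (E : R ≃+* R) (μ : R)
    [Invertible μ] (Δ : R → R)
    (hLeibniz : ∀ a b : R, Δ (a * b) = Δ a * b + E a * Δ b)
    (hE : ∀ a : R, E a = a + μ * Δ a) :
    ∀ m : ℤ,
      invSeriesCoeff E μ m - Δ (E.symm (invSeriesCoeff E μ m * μ))
          + E.symm (invSeriesCoeff E μ (m - 1) * μ)
        = if m = 0 then 1 else 0 :=
  inv_one_add_mu_delta_general R E μ Δ hE
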